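/- arXiv:1801.01384 — 2 statements merged into one kernel-verified Lean document; each statement's English description precedes it below -/
import Mathlib

section
/- Let (L,·,\,/) be a commutative loop with A(L)-holomorph (H,∘). Then (H,∘) is a commutative loop if and only if A(L) is an abelian group and, for each pair (α,β)∈A(L)², the map β is μ-regular with adjoint β′ = α (so β∈Φ(L,·) and α∈Ψ(L,·)). -/
/-- A loop `(L, ·, \, /)` with identity `e`: `mul` is the multiplication,
`ld` the left division (`ld x y = x \ y`), `rd` the right division (`rd x y = x / y`). -/
structure LoopStr (α : Type*) where
  mul : α → α → α
  ld : α → α → α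
  rd : α → α → α
  e : α
  mul_ld : ∀ x y, mul x (ld x y) = y
  rd_mul : ∀ x y, mul (rd y x) x = y
  ld_mul : ∀ x y, ld x (mul x y) = y
  mul_rd : ∀ x y, rd (mul y x) x = y
  e_mul : ∀ x, mul e x = x
  mul_e : ∀ x, mul x e = x

namespace LoopStr

variable {α : Type*}

/-- The middle Bol identity `x(yz \ x) = (x/z)(y \ x)`. -/
def IsMiddleBol (Q : LoopStr α) : Prop :=
  ∀ x y z, Q.mul x (Q.ld (Q.mul y z) x) = Q.mul (Q.rd x z) (Q.ld y x)

/-- The subgroup `A` of permutations of `L` consists of automorphisms of `(L,·)`,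
i.e. `A ≤ AUT(L,·)`. -/
def IsAutSubgroup (Q : LoopStr α) (A : Subgroup (Equiv.Perm α)) : Prop :=
  ∀ θ ∈ A, ∀ x y, θ (Q.mul x y) = Q.mul (θ x) (θ y)

/-- Holomorph multiplication `(α,x)∘(β,y) = (αβ, xβ·y)`.  Maps are written on the
right and composed left to right, so `αβ` ("first `α`, then `β`") is `β * α`
in Mathlib's convention, and `xβ` is `β x`. -/
def hmul (Q : LoopStr α) (A : Subgroup (Equiv.Perm α)) (p q : A × α) : A × α :=
  (q.1 * p.1, Q.mul ((q.1 : Equiv.Perm α) p.2) q.2)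

end LoopStr

/-- `U` is a μ-regular bijection of `(L,·)` with adjoint `U'`:
`(U, U'⁻¹, I)` is an autotopism, i.e. `xU · y(U')⁻¹ = x·y` for all `x,y`. -/
def LoopStr.MuRegAdj {α : Type*} (Q : LoopStr α) (U U' : Equiv.Perm α) : Prop :=
  ∀ x y, Q.mul (U x) (U'⁻¹ y) = Q.mul x y

namespace LoopStr

variable {α : Type*}

theorem muRegAdj_iff (Q : LoopStr α) (U U' : Equiv.Perm α) :
    Q.MuRegAdj U U' ↔ ∀ x y, Q.mul (U x) y = Q.mul x (U' y) := by
  constructor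
  · intro h x y
    simpa using h x (U' y)
  · intro h x y
    simpa using h x (U'⁻¹ y)

theorem hmul_comm_iff (Q : LoopStr α) (A : Subgroup (Equiv.Perm α)) :
    (∀ p q : A × α, Q.hmul A p q = Q.hmul A q p) ↔
      (∀ a ∈ A, ∀ b ∈ A, a * b = b * a) ∧
        ∀ a ∈ A, ∀ b ∈ A, ∀ x y, Q.mul (b x) y = Q.mul (a y) x := by
  constructor
  · intro h
    refine ⟨fun a ha b hb => ?_, fun a ha b hb x y => ?_⟩
    · have h_fst := congrArg Prod.fst (h (⟨b, hb⟩, Q.e) (⟨a, ha⟩, Q.e))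
      exact congrArg Subtype.val h_fst
    · exact congrArg Prod.snd (h (⟨a, ha⟩, x) (⟨b, hb⟩, y))
  · rintro ⟨hAcomm, hmul_snd⟩ ⟨⟨a, ha⟩, x⟩ ⟨⟨b, hb⟩, y⟩
    exact Prod.ext (Subtype.ext (hAcomm b hb a ha)) (hmul_snd a ha b hb x y)

end LoopStr

theorem holomorph_of_comm_commutative_iff_muRegular_general {α : Type*} (Q : LoopStr α)
    (hcomm : ∀ x y, Q.mul x y = Q.mul y x)
    (A : Subgroup (Equiv.Perm α)) :
    (∀ p q : A × α, Q.hmul A p q = Q.hmul A q p) ↔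
      ((∀ a ∈ A, ∀ b ∈ A, a * b = b * a) ∧
        ∀ a ∈ A, ∀ b ∈ A, Q.MuRegAdj b a) := by
  rw [Q.hmul_comm_iff A]
  refine and_congr_right fun _ => forall₂_congr fun a _ => forall₂_congr fun b _ => ?_
  rw [Q.muRegAdj_iff]
  exact forall₂_congr fun x y => by rw [hcomm x (a y)]

/-- Let `(L,·,\,/)` be a commutative loop with `A(L)`-holomorph `(H,∘)`.
Then `(H,∘)` is a commutative loop if and only if `A(L)` is an abelian group and, for
each pair `(α,β) ∈ A(L)²`, the map `β` is μ-regular with adjoint `β′ = α`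
(so `β ∈ Φ(L,·)` and `α ∈ Ψ(L,·)`). -/
theorem holomorph_of_comm_commutative_iff_muRegular {α : Type*} (Q : LoopStr α)
    (hcomm : ∀ x y, Q.mul x y = Q.mul y x)
    (A : Subgroup (Equiv.Perm α)) (hA : Q.IsAutSubgroup A) :
    (∀ p q : A × α, Q.hmul A p q = Q.hmul A q p) ↔
      ((∀ a ∈ A, ∀ b ∈ A, a * b = b * a) ∧
        ∀ a ∈ A, ∀ b ∈ A, Q.MuRegAdj b a) :=
  holomorph_of_comm_commutative_iff_muRegular_general Q hcomm A
end

section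
/- Let (Q,·,\,/) be a left Bol loop with identity e and define x∘y = y·((y⁻¹·x)·y), where y⁻¹ := e/y. Then (Q,∘) is a middle Bol loop: it is a loop with identity e and it satisfies the middle Bol identity x∘((y∘z)\'x) = (x/'z)∘(y\'x) for all x,y,z∈Q, where \' and /' denote the left and right divisions of (Q,∘). -/
/-- Left Bol identity `(x·(y·x))·z = x·(y·(x·z))`. -/
def LoopStr.IsLeftBol {α : Type*} (Q : LoopStr α) : Prop :=
  ∀ x y z, Q.mul (Q.mul x (Q.mul y x)) z = Q.mul x (Q.mul y (Q.mul x z))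

/-!
By the left inverse property of a left Bol loop, `y·((y⁻¹·x)·y) = x / y⁻¹`, so `(Q,∘)` is the
loop `x ∘ y = x / y⁻¹` with divisions `x \' y = (y \ x)⁻¹` and `x /' y = x·y⁻¹`. In these terms
the middle Bol identity reads `x / (x \ (y / u)) = (x·u) / (x \ y)` with `u = z⁻¹`, and this
follows from the Bol identity in the form `(x / d)·w = x·((x·d)⁻¹·(x·w))`.
-/

namespace LoopStr

variable {α : Type*}

def inv (Q : LoopStr α) (x : α) : α := Q.rd Q.e x

variable {Q : LoopStr α}

theorem rd_eq_of_mul_eq {x y z : α} (h : Q.mul z x = y) : Q.rd y x = z :=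
  h ▸ Q.mul_rd x z

theorem ld_eq_of_mul_eq {x y z : α} (h : Q.mul x z = y) : Q.ld x y = z :=
  h ▸ Q.ld_mul x z

theorem mul_left_cancel {x y z : α} (h : Q.mul x y = Q.mul x z) : y = z := by
  rw [← Q.ld_mul x y, h, Q.ld_mul]

theorem rd_e (x : α) : Q.rd x Q.e = x :=
  rd_eq_of_mul_eq (Q.mul_e x)

theorem inv_e : Q.inv Q.e = Q.e :=
  rd_e Q.e

def rdInvLoop (Q : LoopStr α) (hinv : Function.Involutive Q.inv) : LoopStr α where
  mul x y := Q.rd x (Q.inv y)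
  ld x y := Q.inv (Q.ld y x)
  rd x y := Q.mul x (Q.inv y)
  e := Q.e
  mul_ld x y := by rw [hinv]; exact rd_eq_of_mul_eq (Q.mul_ld y x)
  rd_mul x y := Q.mul_rd (Q.inv x) y
  ld_mul x y := by rw [ld_eq_of_mul_eq (Q.rd_mul _ x), hinv]
  mul_rd x y := Q.rd_mul (Q.inv x) y
  e_mul x := hinv x
  mul_e x := by rw [inv_e, rd_e]

namespace IsLeftBol

theorem mul_inv_mul (hQ : Q.IsLeftBol) (x w : α) : Q.mul x (Q.mul (Q.inv x) w) = w := by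
  have h := hQ x (Q.inv x) (Q.ld x w)
  rwa [inv, Q.rd_mul, Q.mul_e, Q.mul_ld, eq_comm] at h

theorem inv_mul_mul (hQ : Q.IsLeftBol) (x w : α) : Q.mul (Q.inv x) (Q.mul x w) = w :=
  mul_left_cancel (hQ.mul_inv_mul x (Q.mul x w))

theorem mul_inv_self (hQ : Q.IsLeftBol) (x : α) : Q.mul x (Q.inv x) = Q.e := by
  simpa only [Q.mul_e] using hQ.mul_inv_mul x Q.e

theorem inv_involutive (hQ : Q.IsLeftBol) : Function.Involutive Q.inv :=
  fun x => rd_eq_of_mul_eq (hQ.mul_inv_self x)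

theorem mul_inv_mul_mul_eq_rd_inv (hQ : Q.IsLeftBol) (x y : α) :
    Q.mul y (Q.mul (Q.mul (Q.inv y) x) y) = Q.rd x (Q.inv y) :=
  (rd_eq_of_mul_eq (by rw [hQ, hQ.mul_inv_self, Q.mul_e, hQ.mul_inv_mul])).symm

theorem rd_mul_eq (hQ : Q.IsLeftBol) (x d w : α) :
    Q.mul (Q.rd x d) w = Q.mul x (Q.mul (Q.inv (Q.mul x d)) (Q.mul x w)) := by
  have hrd : Q.rd x d = Q.mul x (Q.mul (Q.inv (Q.mul x d)) x) :=
    rd_eq_of_mul_eq (by rw [hQ, inv, Q.rd_mul, Q.mul_e])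
  rw [hrd, hQ]

theorem rd_ld_rd (hQ : Q.IsLeftBol) (x y u : α) :
    Q.rd x (Q.ld x (Q.rd y u)) = Q.rd (Q.mul x u) (Q.ld x y) := by
  refine (rd_eq_of_mul_eq ?_).symm
  rw [hQ.rd_mul_eq, Q.mul_ld, Q.mul_ld]
  simpa only [Q.rd_mul] using congrArg (Q.mul x) (hQ.inv_mul_mul (Q.rd y u) u)

theorem isMiddleBol_rdInvLoop (hQ : Q.IsLeftBol) : (Q.rdInvLoop hQ.inv_involutive).IsMiddleBol := by
  intro x y z
  simp only [rdInvLoop, hQ.inv_involutive _]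
  exact hQ.rd_ld_rd x y (Q.inv z)

end IsLeftBol

end LoopStr

/-- Let `(Q,·,\,/)` be a left Bol loop with identity `e` and define
`x∘y = y·((y⁻¹·x)·y)` where `y⁻¹ := e/y`.  Then `(Q,∘)` is a middle Bol loop: it is a
loop with identity `e` (i.e. there is a loop structure `P` with multiplication `∘` and
identity `e`) and it satisfies the middle Bol identity with respect to its own
divisions. -/
theorem leftBol_star_isMiddleBol {α : Type*} (Q : LoopStr α) (hLB : Q.IsLeftBol) :
    ∃ P : LoopStr α,
      (∀ x y, P.mul x y = Q.mul y (Q.mul (Q.mul (Q.rd Q.e y) x) y)) ∧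
      P.e = Q.e ∧ P.IsMiddleBol :=
  ⟨Q.rdInvLoop hLB.inv_involutive, fun x y => (hLB.mul_inv_mul_mul_eq_rd_inv x y).symm, rfl,
    hLB.isMiddleBol_rdInvLoop⟩
end
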